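/- arXiv:2003.13155 — 4 statements merged into one kernel-verified Lean document; each statement's English description precedes it below -/
import Mathlib

section
/- Suppose honest replicas h and h' forward conflicting proposals at times t and t' respectively, each waits Δ before voting, and any message sent by an honest replica at time s arrives at every honest replica by time s + Δ. Then at least one of h, h' receives the other's conflicting proposal before its own vote time, hence at most one of the two conflicting values can receive a vote from an honest replica that voted. -/
/-- If honest replicas `h` and `h'` forward conflicting proposals at times `t` and `t'`,
each waits `Δ` before voting (voting only if no conflicting proposal was received by its
vote time), and forwarded messages arrive within `Δ`, then it is impossible that both
vote for their respective conflicting values. -/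
theorem at_most_one_conflicting_vote (Δ t t' : ℝ)
    (recv_h recv_h' : ℝ → Prop)   -- has received the other's conflicting proposal by time s
    (mono_h : ∀ s s', s ≤ s' → recv_h s → recv_h s')
    (mono_h' : ∀ s s', s ≤ s' → recv_h' s → recv_h' s')
    -- delivery within Δ: h' forwards its proposal at t', so h receives it by t' + Δ,
    -- and h forwards its proposal at t, so h' receives it by t + Δ
    (hdel_h : recv_h (t' + Δ))
    (hdel_h' : recv_h' (t + Δ))
    (votes_h votes_h' : Prop)
    -- a replica votes only if no conflicting proposal was received by its vote time
    (hv : votes_h → ¬ recv_h (t + Δ))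
    (hv' : votes_h' → ¬ recv_h' (t' + Δ)) :
    ¬ (votes_h ∧ votes_h') := by
  rintro ⟨vh, vh'⟩
  rcases le_total t t' with h | h
  · exact hv' vh' (mono_h' _ _ (by linarith) hdel_h')
  · exact hv vh (mono_h _ _ (by linarith) hdel_h)
end

section
/- In a hash-chained block forest where every directly committed block has a certificate, if whenever a block B_l is directly committed in view v every certified block ranking no lower than C_v(B_l) equals or extends B_l, then any two committed blocks at the same height are equal (safety of 1Δ-SMR). -/
lemma smr_height_iter {Block : Type*} (height : Block → ℕ) (parent : Block → Block)
    (hpar : ∀ b, 0 < height b → height (parent b) = height b - 1)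
    (hgen : ∀ b, height b = 0 → parent b = b) :
    ∀ n b, height (parent^[n] b) = height b - n := by
  intro n
  induction n with
  | zero => simp
  | succ n ih =>
    intro b
    rw [Function.iterate_succ_apply']
    have hb := ih b
    rcases Nat.eq_zero_or_pos (height (parent^[n] b)) with h | h
    · rw [hgen _ h, h]; omega
    · rw [hpar _ h]; omega

lemma smr_chain_eq {Block : Type*} (height : Block → ℕ) (parent : Block → Block)
    (hpar : ∀ b, 0 < height b → height (parent b) = height b - 1)
    (hgen : ∀ b, height b = 0 → parent b = b) :
    ∀ n m b, height (parent^[n] b) = height (parent^[m] b) →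
      parent^[n] b = parent^[m] b := by
  have key : ∀ k c, height (parent^[k] c) = height c → parent^[k] c = c := by
    intro k c h
    rw [smr_height_iter height parent hpar hgen] at h
    rcases Nat.eq_zero_or_pos (height c) with h0 | h0
    · have : ∀ j, parent^[j] c = c := by
        intro j
        induction j with
        | zero => rfl
        | succ j ih => rw [Function.iterate_succ_apply', ih, hgen _ h0]
      exact this k
    · have : k = 0 := by omega
      simp [this]
  intro n m b h
  rcases le_total n m with hle | hle
  · obtain ⟨k, rfl⟩ := Nat.exists_eq_add_of_le hle
    rw [add_comm, Function.iterate_add_apply] at h ⊢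
    exact (key k _ h.symm).symm
  · obtain ⟨k, rfl⟩ := Nat.exists_eq_add_of_le hle
    rw [add_comm, Function.iterate_add_apply] at h ⊢
    exact key k _ h

/-- Safety of 1Δ-SMR: in a hash-chained block forest, if whenever a block is directly
committed in a view, every certified block ranking no lower than its certificate equals or
extends it, then any two committed blocks (ancestors of directly committed blocks) at the
same height are equal. -/
theorem smr_safety (Block : Type*)
    (height : Block → ℕ) (parent : Block → Block)
    (hpar : ∀ b, 0 < height b → height (parent b) = height b - 1)
    (hgen : ∀ b, height b = 0 → parent b = b)
    (Certified DirectlyCommitted : Block → Prop)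
    (certView : Block → ℕ)
    (hDC : ∀ b, DirectlyCommitted b → Certified b)
    -- key lemma: every certified block ranking no lower than the certificate of a directly
    -- committed block equals or extends it (extension = iterated parent)
    (hkey : ∀ L, DirectlyCommitted L → ∀ B', Certified B' →
        (certView L < certView B' ∨ (certView L = certView B' ∧ height L ≤ height B')) →
        ∃ n, parent^[n] B' = L) :
    ∀ (Bk Bk' L L' : Block), DirectlyCommitted L → DirectlyCommitted L' →
      (∃ n, parent^[n] L = Bk) → (∃ n, parent^[n] L' = Bk') →
      height Bk = height Bk' → Bk = Bk' := by
  -- symmetric core: if L' extends L, conclude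
  have core : ∀ (Bk Bk' L L' : Block), DirectlyCommitted L → DirectlyCommitted L' →
      (∃ n, parent^[n] L = Bk) → (∃ n, parent^[n] L' = Bk') →
      height Bk = height Bk' →
      (certView L < certView L' ∨ (certView L = certView L' ∧ height L ≤ height L')) →
      Bk = Bk' := by
    intro Bk Bk' L L' hL hL' ⟨n, hn⟩ ⟨m, hm⟩ hh hrank
    obtain ⟨p, hp⟩ := hkey L hL L' (hDC L' hL') hrank
    have hBk : parent^[n + p] L' = Bk := by
      rw [Function.iterate_add_apply, hp, hn]
    rw [← hBk, ← hm]
    apply smr_chain_eq height parent hpar hgen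
    rw [hBk, hm]
    exact hh
  intro Bk Bk' L L' hL hL' h1 h2 hh
  rcases lt_trichotomy (certView L) (certView L') with hv | hv | hv
  · exact core Bk Bk' L L' hL hL' h1 h2 hh (Or.inl hv)
  · rcases le_total (height L) (height L') with hle | hle
    · exact core Bk Bk' L L' hL hL' h1 h2 hh (Or.inr ⟨hv, hle⟩)
    · exact (core Bk' Bk L' L hL' hL h2 h1 hh.symm (Or.inr ⟨hv.symm, hle⟩)).symm
  · exact (core Bk' Bk L' L hL' hL h2 h1 hh.symm (Or.inl hv)).symm
end

section
/- In the good case of the 1Δ-SMR protocol with an honest leader and actual message delay at most δ, each proposed block is committed by all honest replicas within Δ + 2δ of being proposed: proposal delivery takes ≤ δ, the vote-timer takes Δ, and vote delivery takes ≤ δ. -/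
/-- Good-case latency of 1Δ-SMR: with an honest leader proposing at time `t₀` and actual
message delay at most `δ`, each honest replica receives the proposal by `t₀ + δ`, votes
`Δ` later, and votes are delivered within `δ`; hence every honest replica commits the
block within `Δ + 2δ` of it being proposed. -/
theorem smr_good_case_latency (f : ℕ)
    (B : Finset (Fin (2 * f + 1))) (hB : B.card ≤ f)
    (t₀ δ Δ : ℝ) (hδ : 0 ≤ δ) (hδΔ : δ ≤ Δ)
    (recvProposal voteTime commitTime : Fin (2 * f + 1) → ℝ)
    -- proposal delivered within δ
    (hrecv : ∀ r, r ∉ B → recvProposal r ≤ t₀ + δ)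
    -- each honest replica starts a Δ-timer on receipt and votes when it expires
    (hvote : ∀ r, r ∉ B → voteTime r = recvProposal r + Δ)
    -- commit upon receiving f+1 votes, each delivered within δ of being sent
    (hcommit : ∀ r, r ∉ B → ∃ q, q ∉ B ∧ commitTime r ≤ voteTime q + δ) :
    ∀ r, r ∉ B → commitTime r ≤ t₀ + Δ + 2 * δ := by
  intro r hr
  obtain ⟨q, hq, hc⟩ := hcommit r hr
  have h1 := hrecv q hq
  have h2 := hvote q hq
  linarith
end

section
/- If honest replicas enter view v+1 only after waiting 2Δ from forming a blame certificate, any replica that commits at time t_c had not received a blame certificate by t_c, and certificate broadcasts are delivered within Δ, then no honest replica enters view v+1 before time t_c + Δ, and hence every honest replica receives the commit certificate C_v(B_l) before entering view v+1. -/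
/-- View-change timing of 1Δ-SMR: honest replicas enter view `v+1` only `2Δ` after
broadcasting a blame certificate; a committing replica commits at `t_c` having received
no blame certificate by `t_c`, and broadcasts are delivered within `Δ`. Then no honest
replica enters view `v+1` before `t_c + Δ`, and every honest replica receives the commit
certificate `C_v(B_l)` (delivered by `t_c + Δ`) before entering view `v+1`. -/
theorem view_change_commit_cert (n : ℕ)
    (B : Finset (Fin n))
    (Δ t_c : ℝ) (hΔ : 0 < Δ)
    (entersView : Fin n → Prop)
    (enterTime blameTime : Fin n → ℝ)
    -- an honest replica entering view v+1 does so 2Δ after broadcasting the blame certificate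
    (henter : ∀ r, r ∉ B → entersView r → enterTime r = blameTime r + 2 * Δ)
    -- delivery within Δ: the committer has received the blame certificate of any honest
    -- broadcaster by blameTime r + Δ
    (recvBlame : ℝ → Prop)   -- the committing replica has received a blame certificate by time s
    (hmono : ∀ s s', s ≤ s' → recvBlame s → recvBlame s')
    (hdeliver : ∀ r, r ∉ B → entersView r → recvBlame (blameTime r + Δ))
    -- the committing replica had received no blame certificate by its commit time t_c
    (hnoblame : ¬ recvBlame t_c)
    -- the commit certificate is broadcast at t_c and delivered within Δ
    (recvCommitCert : Fin n → ℝ)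
    (hcert : ∀ r, r ∉ B → recvCommitCert r ≤ t_c + Δ) :
    (∀ r, r ∉ B → entersView r → t_c + Δ ≤ enterTime r) ∧
    (∀ r, r ∉ B → entersView r → recvCommitCert r ≤ enterTime r) := by
  have key : ∀ r, r ∉ B → entersView r → t_c + Δ ≤ enterTime r := by
    intro r hr he
    rw [henter r hr he]
    by_contra h
    push_neg at h
    exact hnoblame (hmono _ _ (by linarith) (hdeliver r hr he))
  exact ⟨key, fun r hr he => (hcert r hr).trans (key r hr he)⟩
end
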